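/- Fix β > 0 and 0 < b < 1, and let K(n) = {(x,y) ∈ ℤ² : 0 ≤ y ≤ n and |x| ≤ y}. Then μ_t( every vertex of L lying in K(t^{b/β}) belongs to ℂ₀(t) ) → 1 as t → ∞. (Lemma 3.) -/

import Mathlib

/-!
If every edge with lower endpoint in the triangle `K(T)` is open, every vertex of `K(T)` is
reached from the origin, climbing one edge at a time. There are `O(T²)` such edges, each closed
with probability `exp(-t y^(-β)) ≤ exp(-t (2T)^(-β))` for `y ≤ T + 1/2`; for `T = t^(b/β)` the
exponent is `2^(-β) t^(1-b)`, which beats the polynomial factor because `b < 1`.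
-/

open MeasureTheory ProbabilityTheory Real Filter

namespace OrientedPoisson

/-- Vertices of `ℤ²`; the oriented lattice consists of those with even coordinate sum. -/
abbrev Vertex := ℤ × ℤ

/-- Membership in the oriented lattice `L = {(m,n) : m + n even}`. -/
def IsVertex (v : Vertex) : Prop := (v.1 + v.2) % 2 = 0

/-- An oriented edge, given by its lower endpoint and its direction
(`right = true` means the edge goes to `(m+1, n+1)`, else to `(m-1, n+1)`). -/
structure Edge where
  lower : Vertex
  right : Bool

/-- The upper endpoint of an edge. -/
def Edge.upper (e : Edge) : Vertex :=
  (e.lower.1 + (if e.right then 1 else -1), e.lower.2 + 1)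

/-- A percolation configuration: each edge is open (`true`) or closed. -/
abbrev Config := Edge → Bool

/-- One open oriented step from `u` to `v` in configuration `ω`, along an edge of the lattice. -/
def Step (ω : Config) (u v : Vertex) : Prop :=
  ∃ e : Edge, IsVertex e.lower ∧ e.lower = u ∧ e.upper = v ∧ ω e = true

/-- There is an open directed path from `u` to `v` in `ω`. -/
def Reach (ω : Config) (u v : Vertex) : Prop := Relation.ReflTransGen (Step ω) u v

/-- The cluster `ℂ₀` of the origin: all vertices reachable from `(0,0)` by open directed paths. -/
def cluster (ω : Config) : Set Vertex := {v | Reach ω ((0, 0) : Vertex) v}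

/-- The edge-opening probability `ρ(y,t) = 1 - exp(-t y^(-β))`. -/
noncomputable def rho (β y t : ℝ) : ℝ := 1 - Real.exp (-t * y ^ (-β))

/-- `μ` is a product measure on configurations with edge marginals `p e`. -/
def IsProductMeasure (μ : Measure Config) (p : Edge → ℝ) : Prop :=
  IsProbabilityMeasure μ ∧
  iIndepFun (fun e ω => ω e) μ ∧
  ∀ e : Edge, (μ {ω | ω e = true}).toReal = p e

/-- `μ` is the Poisson percolation measure at time `t > 0` (with rate exponent `β`):
edges are independent and an edge with lower endpoint at height `n ≥ 0` is open with
probability `ρ(n + 1/2, t)`. -/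
def IsPoisson (β t : ℝ) (μ : Measure Config) : Prop :=
  IsProbabilityMeasure μ ∧
  iIndepFun (fun e ω => ω e) μ ∧
  ∀ e : Edge, 0 ≤ e.lower.2 →
    (μ {ω | ω e = true}).toReal = rho β ((e.lower.2 : ℝ) + 1 / 2) t

/-- `μ` is homogeneous oriented percolation with parameter `p`. -/
def IsHomogeneous (p : ℝ) (μ : Measure Config) : Prop :=
  IsProductMeasure μ (fun _ => p)

/-- The critical probability `p_c = inf {p ∈ [0,1] : θ(p) > 0}` where
`θ(p) = P_p(|𝒞₀| = ∞)`. -/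
noncomputable def pc : ℝ :=
  sInf {p : ℝ | p ∈ Set.Icc (0 : ℝ) 1 ∧
    ∀ μ : Measure Config, IsHomogeneous p μ → 0 < μ {ω | (cluster ω).Infinite}}

/-- `n(p,t)`: the largest integer height `y ≥ 1` at which `ρ(y,t) ≥ p`. -/
noncomputable def nPT (β p t : ℝ) : ℤ :=
  sSup {y : ℤ | 1 ≤ y ∧ p ≤ rho β (y : ℝ) t}

/-- `N = n(p_c, t)`. -/
noncomputable def bigN (β t : ℝ) : ℤ := nPT β pc t

/-- The event `K(T) ⊆ ℂ₀`. -/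
def triangleEvent (T : ℝ) : Set Config :=
  {ω | ∀ v : Vertex, IsVertex v → 0 ≤ v.2 → (v.2 : ℝ) ≤ T → |v.1| ≤ v.2 → v ∈ cluster ω}

def Edge.equivProd : Edge ≃ Vertex × Bool where
  toFun e := (e.lower, e.right)
  invFun p := ⟨p.1, p.2⟩
  left_inv _ := rfl
  right_inv _ := rfl

noncomputable def boxEdges (M : ℤ) : Finset Edge :=
  ((Finset.Icc (-M) M ×ˢ Finset.Icc 0 M) ×ˢ Finset.univ).map Edge.equivProd.symm.toEmbedding

lemma mem_boxEdges {M : ℤ} {e : Edge} :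
    e ∈ boxEdges M ↔ -M ≤ e.lower.1 ∧ e.lower.1 ≤ M ∧ 0 ≤ e.lower.2 ∧ e.lower.2 ≤ M := by
  simp [boxEdges, Edge.equivProd, and_assoc]

lemma card_boxEdges {M : ℤ} (hM : 0 ≤ M) :
    ((boxEdges M).card : ℝ) = 2 * (2 * M + 1) * (M + 1) := by
  have hcard : ((boxEdges M).card : ℤ) = 2 * (2 * M + 1) * (M + 1) := by
    simp only [boxEdges, Finset.card_map, Finset.card_product, Int.card_Icc, Finset.card_univ,
      Fintype.card_bool]
    push_cast
    rw [Int.toNat_of_nonneg (by omega), Int.toNat_of_nonneg (by omega)]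
    ring
  exact_mod_cast hcard

lemma exists_edge_upper_eq {v : Vertex} (hv : IsVertex v) (hv2 : 0 < v.2) (habs : |v.1| ≤ v.2) :
    ∃ e : Edge, IsVertex e.lower ∧ e.upper = v ∧ e.lower.2 + 1 = v.2 ∧
      |e.lower.1| ≤ e.lower.2 := by
  obtain ⟨x, y⟩ := v
  simp only [IsVertex, abs_le] at hv habs ⊢
  by_cases hx : 0 < x
  · exact ⟨⟨(x - 1, y - 1), true⟩, by simp only; omega, by simp [Edge.upper], by simp,
      by simp only; omega⟩
  · exact ⟨⟨(x + 1, y - 1), false⟩, by simp only; omega, by simp [Edge.upper], by simp,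
      by simp only; omega⟩

lemma mem_cluster_of_open_below (ω : Config) (M : ℤ)
    (hopen : ∀ e : Edge, IsVertex e.lower → e.lower.2 < M → |e.lower.1| ≤ e.lower.2 →
      ω e = true)
    {v : Vertex} (hv : IsVertex v) (hvM : v.2 ≤ M) (habs : |v.1| ≤ v.2) :
    v ∈ cluster ω := by
  obtain ⟨n, hn⟩ := Int.eq_ofNat_of_zero_le ((abs_nonneg _).trans habs)
  induction n generalizing v with
  | zero =>
    have hv0 : v = (0, 0) := by
      obtain ⟨x, y⟩ := v
      have := abs_le.1 habs
      simp only at hn this ⊢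
      ext <;> simp <;> omega
    exact hv0 ▸ Relation.ReflTransGen.refl
  | succ n ih =>
    obtain ⟨e, he, hup, hheight, heabs⟩ := exists_edge_upper_eq hv (by omega) habs
    exact (ih he (by omega) heabs (by omega)).tail
      ⟨e, he, rfl, hup, hopen e he (by omega) heabs⟩

lemma compl_triangleEvent_subset (T : ℝ) :
    (triangleEvent T)ᶜ ⊆ ⋃ e ∈ boxEdges ⌊T⌋, {ω | ω e = false} := by
  intro ω hω
  by_contra hclosed
  simp only [Set.mem_iUnion, not_exists] at hclosed
  refine hω fun v hv _ hvT habs => mem_cluster_of_open_below ω ⌊T⌋ ?_ hv (Int.le_floor.2 hvT) habs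
  intro e _ hlt heabs
  have := abs_le.1 heabs
  simpa using hclosed e (mem_boxEdges.2 ⟨by omega, by omega, by omega, hlt.le⟩)

lemma IsPoisson.measure_closed {β t : ℝ} {μ : Measure Config} (hμ : IsPoisson β t μ)
    (e : Edge) (he : 0 ≤ e.lower.2) :
    μ {ω | ω e = false} = ENNReal.ofReal (exp (-t * ((e.lower.2 : ℝ) + 1 / 2) ^ (-β))) := by
  obtain ⟨hprob, -, hmarg⟩ := hμ
  have hopen : MeasurableSet {ω : Config | ω e = true} :=
    measurableSet_eq_fun (measurable_pi_apply e) measurable_const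
  have hrho : 0 ≤ rho β ((e.lower.2 : ℝ) + 1 / 2) t := hmarg e he ▸ ENNReal.toReal_nonneg
  have hcompl : {ω : Config | ω e = false} = {ω | ω e = true}ᶜ := by ext; simp
  rw [hcompl, prob_compl_eq_one_sub hopen, ← ENNReal.ofReal_toReal (measure_ne_top μ _),
    hmarg e he, ← ENNReal.ofReal_one, ← ENNReal.ofReal_sub _ hrho, rho, sub_sub_cancel]

lemma IsPoisson.measure_compl_triangleEvent_le {β t T : ℝ} {μ : Measure Config}
    (hμ : IsPoisson β t μ) (ht : 0 ≤ t) (hβ : 0 ≤ β) (hT : 1 ≤ T) :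
    μ (triangleEvent T)ᶜ ≤ ENNReal.ofReal (12 * T ^ 2 * exp (-t * (2 * T) ^ (-β))) := by
  have hM : (1 : ℝ) ≤ ⌊T⌋ := by exact_mod_cast Int.le_floor.2 (by exact_mod_cast hT)
  have hMT : (⌊T⌋ : ℝ) ≤ T := Int.floor_le T
  have hedge : ∀ e ∈ boxEdges ⌊T⌋,
      μ {ω | ω e = false} ≤ ENNReal.ofReal (exp (-t * (2 * T) ^ (-β))) := by
    intro e he
    obtain ⟨-, -, he0, heM⟩ := mem_boxEdges.1 he
    have he0' : (0 : ℝ) ≤ e.lower.2 := by exact_mod_cast he0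
    have heM' : (e.lower.2 : ℝ) ≤ ⌊T⌋ := by exact_mod_cast heM
    rw [hμ.measure_closed e he0]
    refine ENNReal.ofReal_le_ofReal (exp_le_exp.2 ?_)
    rw [neg_mul, neg_mul, neg_le_neg_iff]
    exact mul_le_mul_of_nonneg_left
      (rpow_le_rpow_of_nonpos (by linarith) (by linarith) (neg_nonpos.2 hβ)) ht
  have hcard : ((boxEdges ⌊T⌋).card : ℝ) ≤ 12 * T ^ 2 :=
    (card_boxEdges (by exact_mod_cast hM.trans' zero_le_one)).trans_le (by nlinarith)
  calc μ (triangleEvent T)ᶜ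
      ≤ μ (⋃ e ∈ boxEdges ⌊T⌋, {ω | ω e = false}) := measure_mono (compl_triangleEvent_subset T)
    _ ≤ ∑ e ∈ boxEdges ⌊T⌋, μ {ω | ω e = false} := measure_biUnion_finset_le _ _
    _ ≤ ∑ _e ∈ boxEdges ⌊T⌋, ENNReal.ofReal (exp (-t * (2 * T) ^ (-β))) :=
        Finset.sum_le_sum hedge
    _ = ENNReal.ofReal ((boxEdges ⌊T⌋).card * exp (-t * (2 * T) ^ (-β))) := by
        rw [Finset.sum_const, nsmul_eq_mul, ENNReal.ofReal_mul (by positivity),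
          ENNReal.ofReal_natCast]
    _ ≤ ENNReal.ofReal (12 * T ^ 2 * exp (-t * (2 * T) ^ (-β))) := by gcongr

lemma tendsto_rpow_mul_exp_neg_mul_rpow_atTop_nhds_zero (a : ℝ) {c s : ℝ} (hc : 0 < c)
    (hs : 0 < s) : Tendsto (fun t : ℝ => t ^ a * exp (-c * t ^ s)) atTop (nhds 0) := by
  refine ((tendsto_rpow_mul_exp_neg_mul_atTop_nhds_zero (a / s) c hc).comp
    (tendsto_rpow_atTop hs)).congr' ?_
  filter_upwards [eventually_gt_atTop 0] with t ht
  rw [Function.comp_apply, ← rpow_mul ht.le, mul_div_cancel₀ _ hs.ne']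

lemma tendsto_triangle_bound {β b : ℝ} (hβ : 0 < β) (hb1 : b < 1) :
    Tendsto (fun t : ℝ => 12 * (t ^ (b / β)) ^ 2 * exp (-t * (2 * t ^ (b / β)) ^ (-β)))
      atTop (nhds 0) := by
  have hlim := (tendsto_rpow_mul_exp_neg_mul_rpow_atTop_nhds_zero (2 * (b / β))
    (rpow_pos_of_pos two_pos (-β)) (sub_pos.2 hb1)).const_mul 12
  rw [mul_zero] at hlim
  refine hlim.congr' ?_
  filter_upwards [eventually_gt_atTop 0] with t ht
  have hexponent : t * (2 * t ^ (b / β)) ^ (-β) = 2 ^ (-β) * t ^ (1 - b) := by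
    have hβb : b / β * -β = -b := by field_simp
    rw [mul_rpow zero_le_two (by positivity), ← rpow_mul ht.le, hβb, rpow_neg ht.le,
      rpow_sub ht, rpow_one]
    ring
  simp only [neg_mul, hexponent]
  rw [mul_comm 2 (b / β), rpow_mul ht.le, rpow_two]
  ring

lemma tendsto_measure_of_compl_le {ι Ω : Type*} [MeasurableSpace Ω] {l : Filter ι}
    {μ : ι → Measure Ω} {A : ι → Set Ω} {ε : ι → ENNReal}
    (hμ : ∀ᶠ i in l, IsProbabilityMeasure (μ i)) (hA : ∀ᶠ i in l, μ i (A i)ᶜ ≤ ε i)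
    (hε : Tendsto ε l (nhds 0)) :
    Tendsto (fun i => μ i (A i)) l (nhds 1) := by
  have hlower : Tendsto (fun i => 1 - ε i) l (nhds 1) := by
    simpa using ENNReal.Tendsto.sub tendsto_const_nhds hε (Or.inl ENNReal.one_ne_top)
  refine tendsto_of_tendsto_of_tendsto_of_le_of_le' hlower tendsto_const_nhds ?_ ?_
  · filter_upwards [hμ, hA] with i hμi hAi
    rw [tsub_le_iff_right, ← measure_univ (μ := μ i)]
    exact (measure_univ_le_add_compl (A i)).trans (by gcongr)
  · filter_upwards [hμ] with i hμi using prob_le_one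

/-- Lemma 3: for `0 < b < 1`, with probability tending to one as `t → ∞`, every lattice
vertex in the triangle `K(t^{b/β}) = {(x,y) : 0 ≤ y ≤ t^{b/β}, |x| ≤ y}` belongs to `ℂ₀(t)`. -/
theorem solid_triangle (β b : ℝ) (hβ : 0 < β) (hb0 : 0 < b) (hb1 : b < 1)
    (μ : ℝ → Measure Config) (hμ : ∀ t : ℝ, 0 < t → IsPoisson β t (μ t)) :
    Tendsto
      (fun t : ℝ => μ t {ω : Config |
        ∀ v : Vertex, IsVertex v → 0 ≤ v.2 → (v.2 : ℝ) ≤ t ^ (b / β) →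
          |v.1| ≤ v.2 → v ∈ cluster ω})
      atTop (nhds 1) := by
  refine tendsto_measure_of_compl_le (A := fun t => triangleEvent (t ^ (b / β)))
    (ε := fun t => ENNReal.ofReal (12 * (t ^ (b / β)) ^ 2 * exp (-t * (2 * t ^ (b / β)) ^ (-β))))
    ?_ ?_ ?_
  · filter_upwards [eventually_gt_atTop 0] with t ht using (hμ t ht).1
  · filter_upwards [eventually_ge_atTop 1] with t ht
    exact (hμ t (by linarith)).measure_compl_triangleEvent_le (by linarith) hβ.le
      (one_le_rpow ht (by positivity))
  · simpa using ENNReal.tendsto_ofReal (tendsto_triangle_bound hβ hb1)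

end OrientedPoisson
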